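/- arXiv:1911.04603 — 3 statements merged into one kernel-verified Lean document; each statement's English description precedes it below -/
import Mathlib

section
/- Let H be a planar triangulation on s ≥ 3 vertices, and let G be obtained from H by inserting, into each of the 2s − 4 triangular faces {u,v,w}, three new vertices each adjacent to all of u, v, w. Then G has n = 7s − 12 vertices, minimum degree 3, and taking S = V(H), the number of odd components of G \ S exceeds |S| by 5s − 12; consequently every matching of G has size at most (n + 12)/7. -/
open SimpleGraph

/-- Number of odd connected components of the graph induced on the complement of `S`. -/
noncomputable def oddComp {V : Type*} (G : SimpleGraph V) (S : Set V) : ℕ :=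
  Nat.card {c : (G.induce Sᶜ).ConnectedComponent // Odd (Nat.card c.supp)}

/-- A 1-planar drawing of a graph: vertices are points in the plane, edges are
simple curves between their endpoints avoiding other vertices, and every edge
contains at most one crossing point with other edges. -/
structure OnePlanarDrawing {V : Type*} (G : SimpleGraph V) where
  vert : V → ℝ × ℝ
  vert_inj : Function.Injective vert
  curve : G.edgeSet → ℝ → ℝ × ℝ
  curve_cont : ∀ e, ContinuousOn (curve e) (Set.Icc 0 1)
  curve_inj : ∀ e, Set.InjOn (curve e) (Set.Icc 0 1)
  curve_ends : ∀ (e : G.edgeSet) (u v : V), (e : Sym2 V) = s(u, v) →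
    ({curve e 0, curve e 1} : Set (ℝ × ℝ)) = {vert u, vert v}
  interior_avoid : ∀ (e : G.edgeSet), ∀ t ∈ Set.Ioo (0:ℝ) 1, ∀ v, curve e t ≠ vert v
  one_cross : ∀ e : G.edgeSet,
    Set.Subsingleton {p : ℝ × ℝ | ∃ f : G.edgeSet, f ≠ e ∧
      p ∈ curve e '' Set.Ioo (0:ℝ) 1 ∧ p ∈ curve f '' Set.Ioo (0:ℝ) 1}

/-- A graph is 1-planar if it admits a 1-planar drawing. -/
def OnePlanar {V : Type*} (G : SimpleGraph V) : Prop := Nonempty (OnePlanarDrawing G)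

/-- An edge is crossed in a drawing if its interior meets the interior of another edge. -/
def OnePlanarDrawing.Crossed {V : Type*} {G : SimpleGraph V} (D : OnePlanarDrawing G)
    (e : G.edgeSet) : Prop :=
  ∃ f : G.edgeSet, f ≠ e ∧
    (D.curve e '' Set.Ioo (0:ℝ) 1 ∩ D.curve f '' Set.Ioo (0:ℝ) 1).Nonempty

/-!
The new vertices are pairwise non-adjacent, so `V(H)` is a vertex cover of `G`. Hence every
component of `G - V(H)` is a single new vertex, which gives `3 (2s - 4) = 6s - 12` odd components,
and every edge of a matching uses its own vertex of `V(H)`, so a matching has at most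
`s = (n + 12) / 7` edges. A new vertex sees exactly the three corners of its face, and an old
vertex lies on some face and so sees the three new vertices inserted there.
-/

namespace SimpleGraph

variable {V : Type*} {G : SimpleGraph V}

lemma supp_connectedComponentMk_bot (v : V) :
    ((⊥ : SimpleGraph V).connectedComponentMk v).supp = {v} := by
  ext w
  simp [ConnectedComponent.mem_supp_iff, reachable_bot, eq_comm]

lemma connectedComponentMk_bot_bijective :
    Function.Bijective (⊥ : SimpleGraph V).connectedComponentMk :=
  ⟨fun _ _ h => reachable_bot.mp (ConnectedComponent.exact h), fun c => c.exists_rep⟩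

lemma card_odd_connectedComponent_bot :
    Nat.card {c : (⊥ : SimpleGraph V).ConnectedComponent // Odd (Nat.card c.supp)} =
      Nat.card V := by
  have hodd (c : (⊥ : SimpleGraph V).ConnectedComponent) : Odd (Nat.card c.supp) :=
    c.ind fun v => by simp [supp_connectedComponentMk_bot]
  rw [Nat.card_congr (Equiv.subtypeUnivEquiv hodd)]
  exact (Nat.card_congr (Equiv.ofBijective _ connectedComponentMk_bot_bijective)).symm

lemma IsVertexCover.induce_compl_eq_bot {S : Set V} (hS : G.IsVertexCover S) :
    G.induce Sᶜ = ⊥ := by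
  ext ⟨a, ha⟩ ⟨b, hb⟩
  simp only [comap_adj, Function.Embedding.subtype_apply, bot_adj, iff_false]
  intro hab
  exact (hS hab).elim ha hb

lemma IsVertexCover.oddComp_eq {S : Set V} (hS : G.IsVertexCover S) :
    oddComp G S = Nat.card ↥Sᶜ := by
  rw [oddComp, hS.induce_compl_eq_bot, card_odd_connectedComponent_bot]

lemma Subgraph.IsMatching.ncard_edgeSet_le_of_isVertexCover [Finite V] {M : G.Subgraph}
    (hM : M.IsMatching) {S : Set V} (hS : G.IsVertexCover S) :
    M.edgeSet.ncard ≤ S.ncard := by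
  have hsurj : Function.Surjective fun v : {v : M.verts // v.1 ∈ S} => hM.toEdge v.1 := by
    rintro ⟨e, he⟩
    induction e using Sym2.ind with
    | _ v w =>
      have hvw : M.Adj v w := he
      rcases hS (M.adj_sub hvw) with hv | hw
      · exact ⟨⟨⟨v, hvw.fst_mem⟩, hv⟩, hM.toEdge_eq_of_adj hvw⟩
      · exact ⟨⟨⟨w, hvw.snd_mem⟩, hw⟩,
          (hM.toEdge_eq_toEdge_of_adj hvw).symm.trans (hM.toEdge_eq_of_adj hvw)⟩
  calc M.edgeSet.ncard = Nat.card M.edgeSet := (Nat.card_coe_set_eq _).symm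
    _ ≤ Nat.card {v : M.verts // v.1 ∈ S} := Nat.card_le_card_of_surjective _ hsurj
    _ ≤ Nat.card S := Nat.card_le_card_of_injective (fun v => ⟨v.1.1, v.2⟩)
        fun v w h => by ext; simpa using h
    _ = S.ncard := Nat.card_coe_set_eq _

end SimpleGraph

def IsTripleStacking {V F : Type*} (H : SimpleGraph V) (tri : F → Finset V)
    (G : SimpleGraph (V ⊕ F × Fin 3)) : Prop :=
  ∀ a b, G.Adj a b ↔
    ((∃ u v, a = Sum.inl u ∧ b = Sum.inl v ∧ H.Adj u v)
      ∨ (∃ u f i, a = Sum.inl u ∧ b = Sum.inr (f, i) ∧ u ∈ tri f)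
      ∨ (∃ u f i, b = Sum.inl u ∧ a = Sum.inr (f, i) ∧ u ∈ tri f))

namespace IsTripleStacking

variable {V F : Type*} {H : SimpleGraph V} {tri : F → Finset V}
  {G : SimpleGraph (V ⊕ F × Fin 3)}

lemma isVertexCover_range_inl (hG : IsTripleStacking H tri G) :
    G.IsVertexCover (Set.range Sum.inl) := by
  intro a b hab
  rcases (hG a b).mp hab with ⟨u, -, rfl, -⟩ | ⟨u, -, -, rfl, -⟩ | ⟨u, -, -, rfl, -⟩
  · exact .inl ⟨u, rfl⟩
  · exact .inl ⟨u, rfl⟩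
  · exact .inr ⟨u, rfl⟩

lemma adj_inl_inr (hG : IsTripleStacking H tri G) {u : V} {f : F} (hu : u ∈ tri f) (i : Fin 3) :
    G.Adj (Sum.inl u) (Sum.inr (f, i)) :=
  (hG _ _).mpr <| .inr <| .inl ⟨u, f, i, rfl, rfl, hu⟩

lemma neighborSet_inr (hG : IsTripleStacking H tri G) (f : F) (i : Fin 3) :
    G.neighborSet (Sum.inr (f, i)) = Sum.inl '' (tri f : Set V) := by
  ext a
  rw [mem_neighborSet, hG]
  aesop

lemma card_neighborSet_inr (hG : IsTripleStacking H tri G) (f : F) (i : Fin 3) :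
    Nat.card (G.neighborSet (Sum.inr (f, i))) = (tri f).card := by
  rw [hG.neighborSet_inr, Nat.card_image_of_injective Sum.inl_injective, Nat.card_coe_set_eq,
    Set.ncard_coe_finset]

lemma three_le_card_neighborSet_inl [Finite V] [Finite F] (hG : IsTripleStacking H tri G)
    {u : V} {f : F} (hu : u ∈ tri f) : 3 ≤ Nat.card (G.neighborSet (Sum.inl u)) :=
  calc 3 = Nat.card (Fin 3) := (Nat.card_fin 3).symm
    _ ≤ _ := Nat.card_le_card_of_injective (fun i => ⟨_, hG.adj_inl_inr hu i⟩)
        fun i j h => by simpa using congrArg Subtype.val h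

lemma oddComp_range_inl (hG : IsTripleStacking H tri G) :
    oddComp G (Set.range Sum.inl) = Nat.card F * 3 := by
  rw [hG.isVertexCover_range_inl.oddComp_eq, Set.compl_range_inl,
    Nat.card_range_of_injective Sum.inr_injective, Nat.card_prod, Nat.card_fin]

end IsTripleStacking

theorem stmt4_general {V : Type*} [Fintype V] (s : ℕ) (hs : 3 ≤ s)
    (hcard : Fintype.card V = s)
    (H : SimpleGraph V)
    (F : Type*) [Fintype F] (hF : Fintype.card F = 2 * s - 4)
    (tri : F → Finset V)
    (htri : ∀ f, (tri f).card = 3 ∧ ∀ u ∈ tri f, ∀ v ∈ tri f, u ≠ v → H.Adj u v)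
    (hcover : ∀ v : V, ∃ f, v ∈ tri f)
    (G : SimpleGraph (V ⊕ F × Fin 3))
    (hG : ∀ a b, G.Adj a b ↔
      ((∃ u v, a = Sum.inl u ∧ b = Sum.inl v ∧ H.Adj u v)
        ∨ (∃ u f i, a = Sum.inl u ∧ b = Sum.inr (f, i) ∧ u ∈ tri f)
        ∨ (∃ u f i, b = Sum.inl u ∧ a = Sum.inr (f, i) ∧ u ∈ tri f))) :
    Fintype.card (V ⊕ F × Fin 3) = 7 * s - 12 ∧
    (∀ x, 3 ≤ Nat.card (G.neighborSet x)) ∧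
    (∃ x, Nat.card (G.neighborSet x) = 3) ∧
    (oddComp G (Set.range Sum.inl) : ℤ) - Nat.card (Set.range (Sum.inl : V → V ⊕ F × Fin 3))
      = 5 * (s : ℤ) - 12 ∧
    ∀ M : G.Subgraph, M.IsMatching →
      (M.edgeSet.ncard : ℚ) ≤ ((Fintype.card (V ⊕ F × Fin 3) : ℚ) + 12) / 7 := by
  have hstack : IsTripleStacking H tri G := hG
  have hn : Fintype.card (V ⊕ F × Fin 3) = 7 * s - 12 := by
    simp only [Fintype.card_sum, Fintype.card_prod, Fintype.card_fin, hcard, hF]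
    omega
  have hS : Nat.card (Set.range (Sum.inl : V → V ⊕ F × Fin 3)) = s := by
    rw [Nat.card_range_of_injective Sum.inl_injective, Nat.card_eq_fintype_card, hcard]
  have hdeg_inr (f : F) (i : Fin 3) : Nat.card (G.neighborSet (Sum.inr (f, i))) = 3 :=
    (hstack.card_neighborSet_inr f i).trans (htri f).1
  have hdeg_inl (u : V) : 3 ≤ Nat.card (G.neighborSet (Sum.inl u)) :=
    hstack.three_le_card_neighborSet_inl (hcover u).choose_spec
  have hodd : oddComp G (Set.range Sum.inl) = 6 * s - 12 := by
    rw [hstack.oddComp_range_inl, Nat.card_eq_fintype_card, hF]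
    omega
  have : Nonempty F := Fintype.card_pos_iff.mp (by omega)
  refine ⟨hn, Sum.rec hdeg_inl fun ⟨f, i⟩ => (hdeg_inr f i).ge,
    ⟨_, hdeg_inr (Classical.arbitrary F) 0⟩, by rw [hodd, hS]; omega, fun M hM => ?_⟩
  have hM_le : M.edgeSet.ncard ≤ s := calc
    M.edgeSet.ncard ≤ (Set.range Sum.inl).ncard :=
      hM.ncard_edgeSet_le_of_isVertexCover hstack.isVertexCover_range_inl
    _ = s := by rw [← Nat.card_coe_set_eq, hS]
  rw [hn, Nat.cast_sub (by omega), le_div_iff₀ (by norm_num)]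
  push_cast
  linarith [(Nat.cast_le (α := ℚ)).mpr hM_le]

theorem stmt4 {V : Type*} [Fintype V] (s : ℕ) (hs : 3 ≤ s)
    (hcard : Fintype.card V = s)
    (H : SimpleGraph V)
    (hplanar : ∃ D : OnePlanarDrawing H, ∀ e, ¬ D.Crossed e)
    (htriang : Nat.card H.edgeSet = 3 * s - 6)
    (F : Type*) [Fintype F] (hF : Fintype.card F = 2 * s - 4)
    (tri : F → Finset V)
    (htri : ∀ f, (tri f).card = 3 ∧ ∀ u ∈ tri f, ∀ v ∈ tri f, u ≠ v → H.Adj u v)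
    (hcover : ∀ v : V, ∃ f, v ∈ tri f)
    (G : SimpleGraph (V ⊕ F × Fin 3))
    (hG : ∀ a b, G.Adj a b ↔
      ((∃ u v, a = Sum.inl u ∧ b = Sum.inl v ∧ H.Adj u v)
        ∨ (∃ u f i, a = Sum.inl u ∧ b = Sum.inr (f, i) ∧ u ∈ tri f)
        ∨ (∃ u f i, b = Sum.inl u ∧ a = Sum.inr (f, i) ∧ u ∈ tri f))) :
    Fintype.card (V ⊕ F × Fin 3) = 7 * s - 12 ∧
    (∀ x, 3 ≤ Nat.card (G.neighborSet x)) ∧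
    (∃ x, Nat.card (G.neighborSet x) = 3) ∧
    (oddComp G (Set.range Sum.inl) : ℤ) - Nat.card (Set.range (Sum.inl : V → V ⊕ F × Fin 3))
      = 5 * (s : ℤ) - 12 ∧
    ∀ M : G.Subgraph, M.IsMatching →
      (M.edgeSet.ncard : ℚ) ≤ ((Fintype.card (V ⊕ F × Fin 3) : ℚ) + 12) / 7 :=
  stmt4_general s hs hcard H F hF tri htri hcover G hG
end

section
/- For k ≥ 1, the graph G obtained by gluing k copies of the complete graph K5 along a common edge has n = 3k + 2 vertices, minimum degree 4, is 1-planar, and every matching of G has size at most (n + 4)/3. -/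
open SimpleGraph

/-- `k` copies of `K₅` glued along a common edge: the two vertices of `Fin 2` are the
shared (adjacent) vertices, and each group `{i} × Fin 3` together with them induces `K₅`;
vertices in different groups are non-adjacent. -/
def glueK5 (k : ℕ) : SimpleGraph (Fin 2 ⊕ Fin k × Fin 3) :=
  SimpleGraph.fromRel (fun a b => ∀ i j x y, a = Sum.inr (i, x) → b = Sum.inr (j, y) → i = j)


/-!
Drawing. Put the shared vertices `u`, `v` at `(0, 0)` and `(1, 0)` and give the point
`(a, a (1 - a) c)` the lens coordinates `(a, c)`: each lane `c ∈ ℝ` is a parabola from `u` to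
`v`, and distinct lanes meet only at `u` and `v`. The private vertex `(i, x)` sits at the middle
`a = 1/2` of lane `3 i + x`, and its edges to `u` and `v` run along that lane; `uv` runs along
lane `-1`. In the `i`-th triangle the edges `{0, 1}` and `{1, 2}` run along `a = 1/2`, while
`{0, 2}` bends out to `a = 3/4`, where it crosses lane `3 i + 1`: its only crossing is with the
edge from `v` to the middle vertex, at the midpoints of both.

Matching. A matching edge either contains a shared vertex, which no other matching edge
contains, or lies in one of the `k` triangles, each of which holds at most one matching edge.
So a matching has at most `k + 2 = (n + 4) / 3` edges.
-/

open Set Sum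

lemma SimpleGraph.Subgraph.IsMatching.eq_of_mem_of_mem {V : Type*} {G : SimpleGraph V}
    {M : G.Subgraph} (hM : M.IsMatching) {e f : Sym2 V} (he : e ∈ M.edgeSet)
    (hf : f ∈ M.edgeSet) {v : V} (hve : v ∈ e) (hvf : v ∈ f) : e = f := by
  obtain ⟨w, rfl⟩ := Sym2.mem_iff_exists.mp hve
  obtain ⟨w', rfl⟩ := Sym2.mem_iff_exists.mp hvf
  rw [hM.eq_of_adj_left (Subgraph.mem_edgeSet.mp he) (Subgraph.mem_edgeSet.mp hf)]

lemma Nat.eq_of_cast_lt_add_one {R : Type*} [Semiring R] [LinearOrder R] [IsStrictOrderedRing R]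
    {m n : ℕ} (hmn : (m : R) < n + 1) (hnm : (n : R) < m + 1) : m = n := by
  have := Nat.cast_lt.mp (hmn.trans_eq (Nat.cast_succ n).symm)
  have := Nat.cast_lt.mp (hnm.trans_eq (Nat.cast_succ m).symm)
  omega

lemma eq_half_of_natCast_eq {n i : ℕ} {s : ℝ} (hs : s ∈ Ioo 0 1) (h : (n : ℝ) = 3 * i + 2 * s) :
    s = 1 / 2 := by
  obtain ⟨hs₀, hs₁⟩ := hs
  obtain rfl : n = 3 * i + 1 :=
    Nat.eq_of_cast_lt_add_one (R := ℝ) (by push_cast; linarith) (by push_cast; linarith)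
  push_cast at h
  linarith

def lens (z : ℝ × ℝ) : ℝ × ℝ := (z.1, z.1 * (1 - z.1) * z.2)

lemma continuous_lens : Continuous lens := by
  unfold lens; fun_prop

lemma lens_injOn : InjOn lens {z | z.1 ∈ Ioo 0 1} := by
  rintro ⟨a, c⟩ ⟨ha₀, ha₁⟩ ⟨a', c'⟩ - h
  simp only [lens, Prod.mk.injEq] at h
  obtain ⟨rfl, h⟩ := h
  have : a * (1 - a) ≠ 0 := by nlinarith
  simp [mul_left_cancel₀ this h]

/-- Edge curves in lens coordinates, parametrised by `t ∈ [0, 1]`; `bent i` is the edge `{0, 2}`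
of the `i`-th triangle. -/
inductive Arc
  | uv
  | fromU (n : ℕ)
  | fromV (n : ℕ)
  | straight (n : ℕ)
  | bent (i : ℕ)

namespace Arc

noncomputable def path : Arc → ℝ → ℝ × ℝ
  | uv => fun t => (t, -1)
  | fromU n => fun t => (t / 2, n)
  | fromV n => fun t => (1 - t / 2, n)
  | straight n => fun t => (1 / 2, n + t)
  | bent i => fun t => (1 / 2 + t * (1 - t), 3 * i + 2 * t)

lemma continuous_path (A : Arc) : Continuous A.path := by
  cases A <;> simp only [path] <;> fun_prop

lemma path_fst_mem (A : Arc) {t : ℝ} (ht : t ∈ Ioo 0 1) : (A.path t).1 ∈ Ioo 0 1 := by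
  obtain ⟨ht₀, ht₁⟩ := ht
  cases A <;> simp only [path, mem_Ioo] <;> constructor <;> nlinarith [sq_nonneg (t - 1 / 2)]

lemma injOn_lens_path (A : Arc) : InjOn (lens ∘ A.path) (Icc 0 1) := by
  rintro t ⟨ht₀, ht₁⟩ s ⟨hs₀, hs₁⟩ h
  cases A with
  | uv | fromU _ | fromV _ => simpa [path, lens] using congrArg Prod.fst h
  | straight n => norm_num [path, lens] at h; linarith
  | bent i =>
    have hmem : ∀ r ∈ Icc (0 : ℝ) 1, (bent i).path r ∈ {z : ℝ × ℝ | z.1 ∈ Ioo 0 1} := by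
      rintro r ⟨hr₀, hr₁⟩
      simp only [path, mem_ofPred_eq, mem_Ioo]
      constructor <;> nlinarith [sq_nonneg (r - 1 / 2)]
    have := lens_injOn (hmem t ⟨ht₀, ht₁⟩) (hmem s ⟨hs₀, hs₁⟩) h
    simp only [path, Prod.mk.injEq] at this
    linarith

lemma path_ne_of_mem_Ioo (A : Arc) {t : ℝ} (ht : t ∈ Ioo 0 1) (m : ℕ) :
    A.path t ≠ ((1 / 2 : ℝ), (m : ℝ)) := by
  obtain ⟨ht₀, ht₁⟩ := ht
  intro h
  cases A with
  | uv => simp only [path, Prod.mk.injEq] at h; linarith [h.2, m.cast_nonneg (α := ℝ)]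
  | fromU _ | fromV _ => simp only [path, Prod.mk.injEq] at h; linarith [h.1]
  | straight n =>
    simp only [path, Prod.mk.injEq] at h
    have := Nat.eq_of_cast_lt_add_one (R := ℝ) (m := n) (n := m) (by linarith) (by linarith)
    subst this
    linarith
  | bent _ => simp only [path, Prod.mk.injEq] at h; nlinarith [h.1]

lemma eq_or_eq_half_of_path_eq {A B : Arc} {t s : ℝ} (ht : t ∈ Ioo 0 1) (hs : s ∈ Ioo 0 1)
    (h : A.path t = B.path s) : A = B ∨ t = 1 / 2 := by
  obtain ⟨ht₀, ht₁⟩ := ht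
  obtain ⟨hs₀, hs₁⟩ := hs
  cases A <;> cases B <;> simp only [path, Prod.mk.injEq] at h
  case uv.uv => exact .inl rfl
  case fromU.fromU n m | fromV.fromV n m => exact .inl (by rw [Nat.cast_inj.mp h.2])
  case straight.straight n m =>
    exact .inl <| congrArg straight <|
      Nat.eq_of_cast_lt_add_one (R := ℝ) (by linarith) (by linarith)
  case bent.bent i j =>
    exact .inl <| congrArg bent <| Nat.eq_of_cast_lt_add_one (R := ℝ) (by linarith) (by linarith)
  case fromV.bent n i =>
    have := eq_half_of_natCast_eq ⟨hs₀, hs₁⟩ h.2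
    subst this
    exact .inr (by linarith)
  case bent.fromV i n => exact .inr (eq_half_of_natCast_eq ⟨ht₀, ht₁⟩ h.2.symm)
  -- all other pairs are told apart by the position `a` or the lane `c`
  all_goals exfalso; nlinarith [h.1, h.2, sq_nonneg (s - 1 / 2)]

end Arc

section Degrees

variable {k : ℕ}

@[simp] lemma glueK5_adj_inl_inl {s t : Fin 2} : (glueK5 k).Adj (inl s) (inl t) ↔ s ≠ t := by
  simp [glueK5]

@[simp] lemma glueK5_adj_inl_inr {s : Fin 2} {p : Fin k × Fin 3} :
    (glueK5 k).Adj (inl s) (inr p) := by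
  simp [glueK5]

@[simp] lemma glueK5_adj_inr_inl {s : Fin 2} {p : Fin k × Fin 3} :
    (glueK5 k).Adj (inr p) (inl s) :=
  glueK5_adj_inl_inr.symm

@[simp] lemma glueK5_adj_inr_inr {i j : Fin k} {x y : Fin 3} :
    (glueK5 k).Adj (inr (i, x)) (inr (j, y)) ↔ i = j ∧ x ≠ y := by
  rw [glueK5, SimpleGraph.fromRel_adj]
  constructor
  · rintro ⟨hne, h | h⟩
    · obtain rfl := h i j x y rfl rfl
      exact ⟨rfl, by simpa using hne⟩
    · obtain rfl := h j i y x rfl rfl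
      exact ⟨rfl, by simpa using hne⟩
  · rintro ⟨rfl, hxy⟩
    exact ⟨by simpa using hxy, Or.inl fun _ _ _ _ h₁ h₂ => by simp_all⟩

lemma card_glueK5_vertices : Fintype.card (Fin 2 ⊕ Fin k × Fin 3) = 3 * k + 2 := by
  simp only [Fintype.card_sum, Fintype.card_prod, Fintype.card_fin]
  ring

lemma glueK5_neighborSet_inl (s : Fin 2) : (glueK5 k).neighborSet (inl s) = {inl s}ᶜ := by
  ext (t | p) <;> simp [eq_comm]

lemma glueK5_neighborSet_inr (i : Fin k) (x : Fin 3) :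
    (glueK5 k).neighborSet (inr (i, x)) = Sum.map id (Prod.mk i) '' {inr x}ᶜ := by
  ext (t | ⟨j, y⟩) <;> simp [eq_comm, and_comm]

lemma card_glueK5_neighborSet_inl (s : Fin 2) :
    Nat.card ((glueK5 k).neighborSet (inl s)) = 3 * k + 1 := by
  rw [Nat.card_coe_set_eq, glueK5_neighborSet_inl, ncard_compl, ncard_singleton,
    Nat.card_eq_fintype_card, card_glueK5_vertices]
  rfl

lemma card_glueK5_neighborSet_inr (i : Fin k) (x : Fin 3) :
    Nat.card ((glueK5 k).neighborSet (inr (i, x))) = 4 := by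
  rw [Nat.card_coe_set_eq, glueK5_neighborSet_inr,
    ncard_image_of_injective _
      (Sum.map_injective.mpr ⟨Function.injective_id, Prod.mk_right_injective i⟩),
    ncard_compl, ncard_singleton, Nat.card_eq_fintype_card]
  rfl

end Degrees

section Matching

variable {k : ℕ}

def slot : Fin 2 ⊕ Fin k × Fin 3 → Fin 2 ⊕ Fin k × Fin 3 → Fin 2 ⊕ Fin k
  | inl s, inl t => inl (min s t)
  | inl s, inr _ | inr _, inl s => inl s
  | inr (i, _), inr (j, _) => inr (min i j)

lemma slot_comm (a b : Fin 2 ⊕ Fin k × Fin 3) : slot a b = slot b a := by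
  rcases a with _ | ⟨_, _⟩ <;> rcases b with _ | ⟨_, _⟩ <;> simp [slot, min_comm]

lemma inl_mem_of_slot_eq_inl {a b : Fin 2 ⊕ Fin k × Fin 3} {s : Fin 2}
    (h : slot a b = inl s) : inl s ∈ s(a, b) := by
  rcases a with s' | _ <;> rcases b with t' | _ <;> simp only [slot, inl.injEq, reduceCtorEq] at h
  · rcases min_choice s' t' with h' | h' <;> simp [← h, h']
  all_goals simp [h]

lemma eq_inr_of_slot_eq_inr {a b : Fin 2 ⊕ Fin k × Fin 3} {i : Fin k} (hab : (glueK5 k).Adj a b)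
    (h : slot a b = inr i) : ∃ x y, x ≠ y ∧ a = inr (i, x) ∧ b = inr (i, y) := by
  rcases a with _ | ⟨i', x⟩ <;> rcases b with _ | ⟨j', y⟩ <;>
    simp only [slot, inr.injEq, reduceCtorEq] at h
  obtain ⟨rfl, hxy⟩ := glueK5_adj_inr_inr.mp hab
  rw [min_self] at h
  exact ⟨x, y, hxy, by rw [h], by rw [h]⟩

lemma injOn_slot {M : (glueK5 k).Subgraph} (hM : M.IsMatching) :
    InjOn (Sym2.lift ⟨slot, slot_comm⟩) M.edgeSet := by
  rintro ⟨a, b⟩ hab ⟨c, d⟩ hcd h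
  change slot a b = slot c d at h
  rcases hs : slot a b with s | i
  · rw [hs] at h
    exact hM.eq_of_mem_of_mem hab hcd (inl_mem_of_slot_eq_inl hs) (inl_mem_of_slot_eq_inl h.symm)
  · rw [hs] at h
    obtain ⟨x, y, hxy, rfl, rfl⟩ := eq_inr_of_slot_eq_inr (M.adj_sub hab) hs
    obtain ⟨z, w, hzw, rfl, rfl⟩ := eq_inr_of_slot_eq_inr (M.adj_sub hcd) h.symm
    -- two disjoint pairs cannot fit into a triangle
    have : ∀ x y z w : Fin 3, x ≠ y → z ≠ w → x = z ∨ x = w ∨ y = z ∨ y = w := by decide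
    rcases this x y z w hxy hzw with rfl | rfl | rfl | rfl
    · exact hM.eq_of_mem_of_mem hab hcd (Sym2.mem_mk_left _ _) (Sym2.mem_mk_left _ _)
    · exact hM.eq_of_mem_of_mem hab hcd (Sym2.mem_mk_left _ _) (Sym2.mem_mk_right _ _)
    · exact hM.eq_of_mem_of_mem hab hcd (Sym2.mem_mk_right _ _) (Sym2.mem_mk_left _ _)
    · exact hM.eq_of_mem_of_mem hab hcd (Sym2.mem_mk_right _ _) (Sym2.mem_mk_right _ _)

lemma ncard_edgeSet_le_of_isMatching {M : (glueK5 k).Subgraph} (hM : M.IsMatching) :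
    M.edgeSet.ncard ≤ k + 2 := by
  have := ncard_le_ncard_of_injOn _ (fun _ _ => mem_univ _) (injOn_slot hM) finite_univ
  rwa [ncard_univ, Nat.card_eq_fintype_card, Fintype.card_sum, Fintype.card_fin,
    Fintype.card_fin, add_comm] at this

end Matching

section Drawing

variable {k : ℕ}

noncomputable def node : Fin 2 ⊕ Fin k × Fin 3 → ℝ × ℝ
  | inl s => ((s : ℕ), 0)
  | inr (i, x) => (1 / 2, (3 * i + x : ℕ))

def arcBetween : Fin 2 ⊕ Fin k × Fin 3 → Fin 2 ⊕ Fin k × Fin 3 → Arc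
  | inl _, inl _ => .uv
  | inl s, inr (i, x) | inr (i, x), inl s =>
      if s = 0 then .fromU (3 * i + x) else .fromV (3 * i + x)
  | inr (i, x), inr (j, y) =>
      -- for `x ≠ y`, `x + y = 2` means `{x, y} = {0, 2}`
      if (x : ℕ) + y = 2 then .bent (min i j) else .straight (3 * min (i : ℕ) j + min (x : ℕ) y)

lemma arcBetween_comm (a b : Fin 2 ⊕ Fin k × Fin 3) : arcBetween a b = arcBetween b a := by
  rcases a with _ | ⟨_, _⟩ <;> rcases b with _ | ⟨_, _⟩ <;> simp [arcBetween, min_comm, add_comm]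

def arcOf : Sym2 (Fin 2 ⊕ Fin k × Fin 3) → Arc := Sym2.lift ⟨arcBetween, arcBetween_comm⟩

lemma arcBetween_ends {a b : Fin 2 ⊕ Fin k × Fin 3} (hab : (glueK5 k).Adj a b) :
    ({lens ((arcBetween a b).path 0), lens ((arcBetween a b).path 1)} : Set (ℝ × ℝ)) =
      {lens (node a), lens (node b)} := by
  rcases a with s | ⟨i, x⟩ <;> rcases b with t | ⟨j, y⟩
  · rw [glueK5_adj_inl_inl] at hab
    fin_cases s <;> fin_cases t <;> simp_all [arcBetween, Arc.path, lens, node, pair_comm]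
  · fin_cases s <;> norm_num [arcBetween, Arc.path, lens, node]
  · fin_cases t <;> norm_num [arcBetween, Arc.path, lens, node, pair_comm]
  · obtain ⟨rfl, hxy⟩ := glueK5_adj_inr_inr.mp hab
    fin_cases x <;> fin_cases y <;>
      simp_all [arcBetween, Arc.path, lens, node, pair_comm, add_assoc, one_add_one_eq_two]

lemma injective_lens_node : Function.Injective (lens ∘ node (k := k)) := by
  rintro (s | ⟨i, x⟩) (t | ⟨j, y⟩) h <;>
    simp only [Function.comp_apply, node, lens, Prod.mk.injEq] at h
  · simpa [Fin.val_inj] using h.1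
  · fin_cases s <;> norm_num at h
  · fin_cases t <;> norm_num at h
  · have : 3 * (i : ℕ) + x = 3 * j + y := Nat.cast_injective (R := ℝ) (by linarith [h.2])
    have hi : (i : ℕ) = j := by omega
    have hx : (x : ℕ) = y := by omega
    rw [Fin.val_inj.mp hi, Fin.val_inj.mp hx]

lemma lens_path_ne_lens_node (A : Arc) {t : ℝ} (ht : t ∈ Ioo 0 1) (v : Fin 2 ⊕ Fin k × Fin 3) :
    lens (A.path t) ≠ lens (node v) := by
  intro h
  rcases v with s | ⟨i, x⟩
  · have hfst : (A.path t).1 = (s : ℕ) := congrArg Prod.fst h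
    have := A.path_fst_mem ht
    fin_cases s <;> norm_num at hfst <;> linarith [this.1, this.2]
  · exact A.path_ne_of_mem_Ioo ht _ (lens_injOn (A.path_fst_mem ht) (by norm_num [node]) h)

lemma eq_of_arcOf_eq {e f : Sym2 (Fin 2 ⊕ Fin k × Fin 3)} (he : e ∈ (glueK5 k).edgeSet)
    (hf : f ∈ (glueK5 k).edgeSet) (h : arcOf e = arcOf f) : e = f := by
  rcases e with ⟨a, b⟩
  rcases f with ⟨c, d⟩
  have hends := arcBetween_ends he
  rw [show arcBetween a b = arcBetween c d from h, arcBetween_ends hf, pair_eq_pair_iff] at hends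
  simp only [← Function.comp_apply (f := lens) (g := node), injective_lens_node.eq_iff] at hends
  rcases hends with ⟨rfl, rfl⟩ | ⟨rfl, rfl⟩
  · rfl
  · exact Sym2.eq_swap

noncomputable def glueK5Drawing (k : ℕ) : OnePlanarDrawing (glueK5 k) where
  vert := lens ∘ node
  vert_inj := injective_lens_node
  curve e := lens ∘ (arcOf e.1).path
  curve_cont e := (continuous_lens.comp (arcOf e.1).continuous_path).continuousOn
  curve_inj e := (arcOf e.1).injOn_lens_path
  curve_ends := by
    rintro ⟨e, he⟩ u v rfl
    exact arcBetween_ends he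
  interior_avoid e t ht v := lens_path_ne_lens_node _ ht v
  one_cross := by
    suffices ∀ e f : (glueK5 k).edgeSet, f ≠ e → ∀ t ∈ Ioo (0 : ℝ) 1, ∀ s ∈ Ioo (0 : ℝ) 1,
        lens ((arcOf e.1).path t) = lens ((arcOf f.1).path s) → t = 1 / 2 by
      rintro e _ ⟨f, hfe, ⟨t, ht, rfl⟩, ⟨s, hs, hst⟩⟩ _ ⟨f', hfe', ⟨t', ht', rfl⟩, ⟨s', hs', hst'⟩⟩
      simp only [Function.comp_apply]
      rw [this e f hfe t ht s hs hst.symm, this e f' hfe' t' ht' s' hs' hst'.symm]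
    intro e f hfe t ht s hs h
    refine (Arc.eq_or_eq_half_of_path_eq ht hs (lens_injOn ((arcOf e.1).path_fst_mem ht)
      ((arcOf f.1).path_fst_mem hs) h)).resolve_left fun hef => hfe ?_
    exact Subtype.ext (eq_of_arcOf_eq f.2 e.2 hef.symm)

end Drawing

theorem stmt6 (k : ℕ) (hk : 1 ≤ k) :
    Fintype.card (Fin 2 ⊕ Fin k × Fin 3) = 3 * k + 2 ∧
    (∀ v, 4 ≤ Nat.card ((glueK5 k).neighborSet v)) ∧
    (∃ v, Nat.card ((glueK5 k).neighborSet v) = 4) ∧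
    OnePlanar (glueK5 k) ∧
    ∀ M : (glueK5 k).Subgraph, M.IsMatching →
      (M.edgeSet.ncard : ℚ) ≤ (((3 * k + 2 : ℕ) : ℚ) + 4) / 3 := by
  refine ⟨card_glueK5_vertices, ?_, ⟨inr (⟨0, hk⟩, 0), card_glueK5_neighborSet_inr _ _⟩,
    ⟨glueK5Drawing k⟩, fun M hM => ?_⟩
  · rintro (s | ⟨i, x⟩)
    · rw [card_glueK5_neighborSet_inl]
      omega
    · rw [card_glueK5_neighborSet_inr]
  · have : (M.edgeSet.ncard : ℚ) ≤ k + 2 := by exact_mod_cast ncard_edgeSet_le_of_isMatching hM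
    push_cast
    linarith
end

section
/- For every N there exists a simple 1-planar graph G with minimum degree 5 and n ≥ N vertices such that every matching of G has size at most (2n + 3)/5. -/
open SimpleGraph

/-!
Take the windmill graph: `k ≥ 1` copies of `K₆` sharing one vertex, with `n = 5k + 1` vertices.
The vertices off the shared one have degree `5`. A matching has at most one edge at the shared
vertex and at most two edges inside each of the `k` five-vertex blades, so at most
`2k + 1 = (2n + 3) / 5` edges.

For 1-planarity, `K₆` has a straight-line drawing with three crossings, one vertex at the origin
and the other five in the wedge `|y| < x`. Shearing the `i`-th copy by `(x, y) ↦ (x, y + 2ix)`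
puts the blades into pairwise disjoint wedges, so edges of different blades never meet.
-/

namespace SimpleGraph

open Finset

variable {V W : Type*} {G : SimpleGraph V}

theorem Iso.card_neighborSet {H : SimpleGraph W} (φ : G ≃g H) (v : V) :
    Nat.card (G.neighborSet v) = Nat.card (H.neighborSet (φ v)) :=
  Nat.card_congr (φ.toEquiv.subtypeEquiv fun _ => φ.map_adj_iff.symm)

theorem Subgraph.ncard_edgeSet_map_iso {H : SimpleGraph W} (φ : G ≃g H) (M : G.Subgraph) :
    (M.map φ.toHom).edgeSet.ncard = M.edgeSet.ncard := by
  rw [edgeSet_map, Set.ncard_image_of_injective _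
    (Sym2.map.injective (show Function.Injective φ.toHom from φ.injective))]

namespace Subgraph.IsMatching

variable {M : G.Subgraph}

theorem eq_of_mem_edgeSet (hM : M.IsMatching) {e f : Sym2 V} (he : e ∈ M.edgeSet)
    (hf : f ∈ M.edgeSet) {v : V} (hve : v ∈ e) (hvf : v ∈ f) : e = f := by
  obtain ⟨u, rfl⟩ := Sym2.mem_iff_exists.1 hve
  obtain ⟨w, rfl⟩ := Sym2.mem_iff_exists.1 hvf
  rw [hM.eq_of_adj_left (M.mem_edgeSet.1 he) (M.mem_edgeSet.1 hf)]

variable [DecidableEq V] {E : Finset (Sym2 V)}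

theorem card_filter_mem_le_one (hM : M.IsMatching) (hE : ∀ e ∈ E, e ∈ M.edgeSet) (v : V) :
    #{e ∈ E | v ∈ e} ≤ 1 :=
  card_le_one.2 fun e he f hf => by
    rw [mem_filter] at he hf
    exact hM.eq_of_mem_edgeSet (hE e he.1) (hE f hf.1) he.2 hf.2

theorem two_mul_card_le (hM : M.IsMatching) (hE : ∀ e ∈ E, e ∈ M.edgeSet) {s : Finset V}
    (hEs : ∀ e ∈ E, ∀ v ∈ e, v ∈ s) : 2 * #E ≤ #s :=
  calc 2 * #E = ∑ e ∈ E, #e.toFinset := by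
        rw [sum_congr rfl fun e he => Sym2.card_toFinset_of_not_isDiag e
          (G.not_isDiag_of_mem_edgeSet (M.edgeSet_subset (hE e he))), sum_const, smul_eq_mul,
          mul_comm]
    _ = #(E.biUnion Sym2.toFinset) := by
        refine (card_biUnion fun e he f hf hef =>
          Finset.disjoint_left.2 fun v hve hvf => hef ?_).symm
        exact hM.eq_of_mem_edgeSet (hE e he) (hE f hf) (Sym2.mem_toFinset.1 hve)
          (Sym2.mem_toFinset.1 hvf)
    _ ≤ #s := card_le_card <| biUnion_subset.2 fun e he v hv =>
        hEs e he v (Sym2.mem_toFinset.1 hv)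

/-- A weak form of the Tutte–Berge bound. -/
theorem ncard_edgeSet_le [Fintype V] (hM : M.IsMatching) {ι : Type*} [Fintype ι] (S : Finset V)
    (s : ι → Finset V) (hG : ∀ ⦃u v⦄, G.Adj u v → u ∈ S ∨ v ∈ S ∨ ∃ i, u ∈ s i ∧ v ∈ s i) :
    M.edgeSet.ncard ≤ #S + ∑ i, #(s i) / 2 := by
  classical
  set E := M.edgeSet.toFinset
  have hE : ∀ e ∈ E, e ∈ M.edgeSet := fun e he => Set.mem_toFinset.1 he
  have hcover : E ⊆ S.biUnion (fun v => {e ∈ E | v ∈ e}) ∪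
      univ.biUnion (fun i => {e ∈ E | ∀ v ∈ e, v ∈ s i}) := by
    intro e he
    induction e using Sym2.ind with
    | h u v =>
      simp only [mem_union, mem_biUnion, mem_filter, mem_univ, true_and, Sym2.mem_iff,
        forall_eq_or_imp, forall_eq]
      rcases hG (M.adj_sub (hE _ he)) with hu | hv | ⟨i, hu, hv⟩
      · exact .inl ⟨u, hu, he, .inl rfl⟩
      · exact .inl ⟨v, hv, he, .inr rfl⟩
      · exact .inr ⟨i, he, hu, hv⟩
  rw [Set.ncard_eq_toFinset_card']
  calc #E ≤ #(S.biUnion fun v => {e ∈ E | v ∈ e}) +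
        #(univ.biUnion fun i => {e ∈ E | ∀ v ∈ e, v ∈ s i}) :=
        (card_le_card hcover).trans (card_union_le _ _)
    _ ≤ ∑ _v ∈ S, 1 + ∑ i, #(s i) / 2 := by
        gcongr
        · exact card_biUnion_le.trans <| sum_le_sum fun v _ =>
            card_filter_mem_le_one hM hE v
        · refine card_biUnion_le.trans <| sum_le_sum fun i _ =>
            (Nat.le_div_iff_mul_le two_pos).2 ?_
          rw [mul_comm]
          exact two_mul_card_le hM (fun e he => hE e (mem_filter.1 he).1)
            fun e he => (mem_filter.1 he).2
    _ = #S + ∑ i, #(s i) / 2 := by rw [sum_const, smul_eq_mul, mul_one]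

end Subgraph.IsMatching

end SimpleGraph

namespace OnePlanarWindmill

section StraightLine

variable {V W : Type*}

/-- `pos` places the vertices so that drawing every edge as a straight segment is 1-planar. -/
structure IsStraightLineOnePlanar (G : SimpleGraph V) (pos : V → ℝ × ℝ) : Prop where
  injective : Function.Injective pos
  notMem_openSegment : ∀ ⦃u v⦄, G.Adj u v → ∀ w, w ≠ u → w ≠ v →
    pos w ∉ openSegment ℝ (pos u) (pos v)
  crossings_subsingleton : ∀ ⦃u v⦄, G.Adj u v →
    {p | ∃ x y, G.Adj x y ∧ s(x, y) ≠ s(u, v) ∧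
      p ∈ openSegment ℝ (pos u) (pos v) ∧ p ∈ openSegment ℝ (pos x) (pos y)}.Subsingleton

namespace IsStraightLineOnePlanar

variable {G : SimpleGraph V} {pos : V → ℝ × ℝ}

theorem onePlanar (h : IsStraightLineOnePlanar G pos) : OnePlanar G := by
  let ends (e : G.edgeSet) : V × V := Quot.out e.1
  have ends_mk (e : G.edgeSet) : s((ends e).1, (ends e).2) = e := Quot.out_eq e.1
  have ends_adj (e : G.edgeSet) : G.Adj (ends e).1 (ends e).2 := by
    rw [← G.mem_edgeSet, ends_mk]; exact e.2
  let curve (e : G.edgeSet) : ℝ → ℝ × ℝ := AffineMap.lineMap (pos (ends e).1) (pos (ends e).2)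
  have curve_Ioo (e : G.edgeSet) :
      curve e '' Set.Ioo 0 1 = openSegment ℝ (pos (ends e).1) (pos (ends e).2) :=
    (openSegment_eq_image_lineMap ℝ _ _).symm
  refine ⟨⟨pos, h.injective, curve, fun e => ?_, fun e => ?_, fun e u v he => ?_,
    fun e t ht w hw => ?_, fun e => ?_⟩⟩
  · exact (AffineMap.lineMap_continuous).continuousOn
  · exact (AffineMap.lineMap_injective ℝ
      (h.injective.ne (ends_adj e).ne)).injOn
  · rw [← ends_mk e, Sym2.eq_iff] at he
    simp only [curve, AffineMap.lineMap_apply_zero, AffineMap.lineMap_apply_one]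
    rcases he with ⟨rfl, rfl⟩ | ⟨rfl, rfl⟩
    · rfl
    · exact Set.pair_comm _ _
  · have hmem : pos w ∈ openSegment ℝ (pos (ends e).1) (pos (ends e).2) := by
      rw [← curve_Ioo, ← hw]; exact Set.mem_image_of_mem _ ht
    have hne := h.injective.ne (ends_adj e).ne
    by_cases h1 : w = (ends e).1
    · subst h1; exact hne (left_mem_openSegment_iff.1 hmem)
    by_cases h2 : w = (ends e).2
    · subst h2; exact hne (right_mem_openSegment_iff.1 hmem)
    exact h.notMem_openSegment (ends_adj e) w h1 h2 hmem
  · refine (h.crossings_subsingleton (ends_adj e)).anti ?_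
    rintro p ⟨f, hfe, hpe, hpf⟩
    refine ⟨(ends f).1, (ends f).2, ends_adj f, ?_, curve_Ioo e ▸ hpe, curve_Ioo f ▸ hpf⟩
    rw [ends_mk, ends_mk]
    exact fun hf => hfe (Subtype.ext hf)

theorem comap (h : IsStraightLineOnePlanar G pos) (f : W ↪ V) :
    IsStraightLineOnePlanar (G.comap f) (pos ∘ f) where
  injective := h.injective.comp f.injective
  notMem_openSegment u v huv w hwu hwv :=
    h.notMem_openSegment huv (f w) (f.injective.ne hwu) (f.injective.ne hwv)
  crossings_subsingleton u v huv := (h.crossings_subsingleton huv).anti <| by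
    rintro p ⟨x, y, hxy, hne, hp⟩
    refine ⟨f x, f y, hxy, fun heq => hne (Sym2.map.injective f.injective ?_), hp⟩
    simpa using heq

end IsStraightLineOnePlanar

end StraightLine

section Orientation

variable {R : Type*} [CommRing R]

def cross (u v : R × R) : R := u.1 * v.2 - u.2 * v.1

/-- Twice the signed area of the triangle `a b c`; it vanishes exactly on the line through `a`
and `b`. -/
def orient (a b c : R × R) : R := cross (b - a) (c - a)

/-- The open segment from `c` to `d` misses the line through `a` and `b`. -/
abbrev SegmentOffLine [LinearOrder R] (a b c d : R × R) : Prop :=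
  0 ≤ orient a b c * orient a b d ∧ orient a b c + orient a b d ≠ 0

end Orientation

section Segments

variable {a b c d p : ℝ × ℝ}

theorem orient_add_smul {s t : ℝ} (hst : s + t = 1) :
    orient a b (s • c + t • d) = s * orient a b c + t * orient a b d := by
  simp only [orient, cross, Prod.fst_add, Prod.snd_add, Prod.smul_fst, Prod.smul_snd,
    Prod.fst_sub, Prod.snd_sub, smul_eq_mul]
  linear_combination ((b.1 - a.1) * a.2 - (b.2 - a.2) * a.1) * hst

theorem orient_eq_zero_of_mem_openSegment (hp : p ∈ openSegment ℝ a b) : orient a b p = 0 := by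
  obtain ⟨s, t, -, -, hst, rfl⟩ := hp
  rw [orient_add_smul hst]
  simp only [orient, cross, sub_self, Prod.fst_zero, Prod.snd_zero]
  ring

theorem SegmentOffLine.disjoint_openSegment (h : SegmentOffLine a b c d) :
    Disjoint (openSegment ℝ a b) (openSegment ℝ c d) := by
  refine Set.disjoint_left.2 fun p hab hcd => ?_
  obtain ⟨s, t, hs, ht, hst, rfl⟩ := hcd
  have hzero := orient_eq_zero_of_mem_openSegment hab
  rw [orient_add_smul hst] at hzero
  obtain ⟨hprod, hsum⟩ := h
  set x := orient a b c
  set y := orient a b d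
  have hx : s * x ^ 2 = -(t * (x * y)) := by linear_combination x * hzero
  have hy : t * y ^ 2 = -(s * (x * y)) := by linear_combination y * hzero
  have hx₀ : x ^ 2 = 0 := le_antisymm
    (nonpos_of_mul_nonpos_right (by nlinarith [mul_nonneg ht.le hprod]) hs) (sq_nonneg x)
  have hy₀ : y ^ 2 = 0 := le_antisymm
    (nonpos_of_mul_nonpos_right (by nlinarith [mul_nonneg hs.le hprod]) ht) (sq_nonneg y)
  exact hsum (by rw [pow_eq_zero_iff two_ne_zero |>.1 hx₀, pow_eq_zero_iff two_ne_zero |>.1 hy₀,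
    add_zero])

theorem openSegment_inter_subsingleton (h : cross (b - a) (d - c) ≠ 0) :
    (openSegment ℝ a b ∩ openSegment ℝ c d).Subsingleton := by
  rintro p ⟨hpab, hpcd⟩ q ⟨hqab, hqcd⟩
  have h₁ := orient_eq_zero_of_mem_openSegment hpab
  have h₂ := orient_eq_zero_of_mem_openSegment hpcd
  have h₃ := orient_eq_zero_of_mem_openSegment hqab
  have h₄ := orient_eq_zero_of_mem_openSegment hqcd
  simp only [orient, cross, Prod.fst_sub, Prod.snd_sub] at h h₁ h₂ h₃ h₄
  refine Prod.ext (mul_left_cancel₀ h ?_) (mul_left_cancel₀ h ?_)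
  · linear_combination (d.1 - c.1) * (h₁ - h₃) - (b.1 - a.1) * (h₂ - h₄)
  · linear_combination (d.2 - c.2) * (h₁ - h₃) - (b.2 - a.2) * (h₂ - h₄)

end Segments

section Wedges

def wedge : Set (ℝ × ℝ) := {p | |p.2| < p.1}

theorem openSegment_subset_wedge {p q : ℝ × ℝ} (hp : |p.2| ≤ p.1) (hq : q ∈ wedge) :
    openSegment ℝ p q ⊆ wedge := by
  rintro r ⟨s, t, hs, ht, -, rfl⟩
  simp only [wedge, Set.mem_ofPred_eq, Prod.fst_add, Prod.snd_add, Prod.smul_fst, Prod.smul_snd,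
    smul_eq_mul] at hq ⊢
  rw [abs_le] at hp
  rw [abs_lt] at hq ⊢
  constructor <;> nlinarith [hp.1, hp.2, hq.1, hq.2]

def shear (t : ℝ) : ℝ × ℝ →ₗ[ℝ] ℝ × ℝ where
  toFun p := (p.1, p.2 + t * p.1)
  map_add' p q := by ext <;> simp only [Prod.fst_add, Prod.snd_add]; ring
  map_smul' c p := by
    ext <;> simp only [Prod.smul_fst, Prod.smul_snd, smul_eq_mul, RingHom.id_apply]; ring

@[simp]
theorem shear_apply (t : ℝ) (p : ℝ × ℝ) : shear t p = (p.1, p.2 + t * p.1) := rfl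

theorem shear_injective (t : ℝ) : Function.Injective (shear t) := by
  intro p q h
  simp only [shear_apply, Prod.mk.injEq] at h
  exact Prod.ext h.1 (by linear_combination h.2 - t * h.1)

theorem image_openSegment_shear (t : ℝ) (p q : ℝ × ℝ) :
    shear t '' openSegment ℝ p q = openSegment ℝ (shear t p) (shear t q) :=
  image_openSegment ℝ (shear t).toAffineMap p q

theorem disjoint_shear_image_wedge {i j : ℕ} (hij : i ≠ j) :
    Disjoint (shear (2 * i) '' wedge) (shear (2 * j) '' wedge) := by
  refine Set.disjoint_left.2 ?_
  rintro _ ⟨p, hp, rfl⟩ ⟨q, hq, hpq⟩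
  simp only [shear_apply, Prod.mk.injEq] at hpq
  obtain ⟨h₁, h₂⟩ := hpq
  simp only [wedge, Set.mem_ofPred_eq, abs_lt] at hp hq
  rcases hij.lt_or_gt with h | h
  · have : (i : ℝ) + 1 ≤ j := by exact_mod_cast h
    nlinarith
  · have : (j : ℝ) + 1 ≤ i := by exact_mod_cast h
    nlinarith

end Wedges

section Windmill

variable {m k : ℕ}

def blade (i : Fin k) : Option (Fin m) ↪ Option (Fin k × Fin m) :=
  (Function.Embedding.sectR i (Fin m)).optionMap

@[simp]
theorem blade_none (i : Fin k) : blade (m := m) i none = none := rfl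

@[simp]
theorem blade_some (i : Fin k) (j : Fin m) : blade i (some j) = some (i, j) := rfl

/-- The windmill graph `Wd(m + 1, k)`. -/
def windmill (m k : ℕ) : SimpleGraph (Option (Fin k × Fin m)) :=
  ⨆ i, (⊤ : SimpleGraph (Option (Fin m))).map (blade i)

theorem windmill_adj {u v : Option (Fin k × Fin m)} :
    (windmill m k).Adj u v ↔ ∃ i a b, a ≠ b ∧ blade i a = u ∧ blade i b = v := by
  simp [windmill]

theorem exists_blade_eq_or (w : Option (Fin k × Fin m)) (i : Fin k) :
    (∃ a, blade i a = w) ∨ ∃ j c, j ≠ i ∧ w = some (j, c) := by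
  rcases w with _ | ⟨j, c⟩
  · exact .inl ⟨none, rfl⟩
  · by_cases hji : j = i
    · exact .inl ⟨some c, by rw [hji, blade_some]⟩
    · exact .inr ⟨j, c, hji, rfl⟩

theorem windmill_neighborSet_none :
    (windmill m k).neighborSet none = Set.range some := by
  ext v
  simp only [mem_neighborSet, windmill_adj, Set.mem_range]
  constructor
  · rintro ⟨i, a, b, hab, ha, rfl⟩
    cases a with
    | none => cases b with
      | none => exact absurd rfl hab
      | some j => exact ⟨(i, j), rfl⟩
    | some => simp at ha
  · rintro ⟨⟨i, j⟩, rfl⟩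
    exact ⟨i, none, some j, Option.some_ne_none j |>.symm, rfl, rfl⟩

theorem windmill_neighborSet_some (i : Fin k) (j : Fin m) :
    (windmill m k).neighborSet (some (i, j)) = blade i '' {some j}ᶜ := by
  ext v
  simp only [mem_neighborSet, windmill_adj, Set.mem_image, Set.mem_compl_singleton_iff]
  constructor
  · rintro ⟨i', a, b, hab, ha, rfl⟩
    cases a with
    | none => simp at ha
    | some j' =>
      simp only [blade_some, Option.some.injEq, Prod.mk.injEq] at ha
      obtain ⟨rfl, rfl⟩ := ha
      exact ⟨b, hab.symm, rfl⟩
  · rintro ⟨b, hb, rfl⟩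
    exact ⟨i, some j, b, hb.symm, rfl, rfl⟩

theorem card_neighborSet_windmill_none :
    Nat.card ((windmill m k).neighborSet none) = k * m := by
  rw [windmill_neighborSet_none, Nat.card_range_of_injective (Option.some_injective _),
    Nat.card_prod, Nat.card_eq_fintype_card, Fintype.card_fin, Nat.card_eq_fintype_card,
    Fintype.card_fin]

theorem card_neighborSet_windmill_some (i : Fin k) (j : Fin m) :
    Nat.card ((windmill m k).neighborSet (some (i, j))) = m := by
  rw [windmill_neighborSet_some, Nat.card_image_of_injective (blade i).injective,
    Nat.card_coe_set_eq, Set.ncard_compl, Set.ncard_singleton, Nat.card_eq_fintype_card,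
    Fintype.card_option, Fintype.card_fin, Nat.add_sub_cancel]

theorem le_card_neighborSet_windmill (hk : 1 ≤ k) (w : Option (Fin k × Fin m)) :
    m ≤ Nat.card ((windmill m k).neighborSet w) := by
  rcases w with _ | ⟨i, j⟩
  · rw [card_neighborSet_windmill_none]
    exact Nat.le_mul_of_pos_left m hk
  · rw [card_neighborSet_windmill_some]

end Windmill

section WindmillDrawing

variable {m k : ℕ} {B : Option (Fin m) → ℝ × ℝ}

def windmillPos (B : Option (Fin m) → ℝ × ℝ) : Option (Fin k × Fin m) → ℝ × ℝ
  | none => 0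
  | some (i, j) => shear (2 * (i : ℕ)) (B (some j))

theorem windmillPos_blade (h₀ : B none = 0) (i : Fin k) (a : Option (Fin m)) :
    windmillPos B (blade i a) = shear (2 * (i : ℕ)) (B a) := by
  cases a with
  | none => rw [h₀, map_zero]; rfl
  | some j => rfl

theorem windmillPos_mem_image_wedge (hB : ∀ j, B (some j) ∈ wedge) (i : Fin k) (j : Fin m) :
    windmillPos B (some (i, j)) ∈ shear (2 * (i : ℕ)) '' wedge :=
  Set.mem_image_of_mem _ (hB j)

theorem openSegment_subset_wedge_of_ne (h₀ : B none = 0) (hB : ∀ j, B (some j) ∈ wedge)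
    {a b : Option (Fin m)} (hab : a ≠ b) : openSegment ℝ (B a) (B b) ⊆ wedge := by
  have hle : ∀ a, |(B a).2| ≤ (B a).1 := fun a => by
    cases a with
    | none => simp [h₀]
    | some j => exact (hB j).le
  cases b with
  | none =>
    cases a with
    | none => exact absurd rfl hab
    | some j => exact openSegment_symm ℝ (B (some j)) _ ▸ openSegment_subset_wedge (hle _) (hB j)
  | some j => exact openSegment_subset_wedge (hle a) (hB j)

theorem windmillPos_openSegment (h₀ : B none = 0) (i : Fin k) (a b : Option (Fin m)) :
    openSegment ℝ (windmillPos B (blade i a)) (windmillPos B (blade i b)) =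
      shear (2 * (i : ℕ)) '' openSegment ℝ (B a) (B b) := by
  rw [windmillPos_blade h₀, windmillPos_blade h₀, image_openSegment_shear]

theorem windmillPos_injective (hB : Function.Injective B) (h₀ : B none = 0)
    (hwedge : ∀ j, B (some j) ∈ wedge) : Function.Injective (windmillPos (k := k) B) := by
  have key : ∀ (i : Fin k) (a : Fin m) v,
      windmillPos B (some (i, a)) = windmillPos B v → some (i, a) = v := by
    intro i a v huv
    rcases exists_blade_eq_or v i with ⟨b, rfl⟩ | ⟨j, c, hji, rfl⟩
    · rw [← blade_some, windmillPos_blade h₀, windmillPos_blade h₀] at huv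
      rw [← blade_some, hB (shear_injective _ huv)]
    · exact absurd huv <| Set.disjoint_iff_forall_ne.1
        (disjoint_shear_image_wedge (Fin.val_injective.ne hji.symm))
        (windmillPos_mem_image_wedge hwedge i a) (windmillPos_mem_image_wedge hwedge j c)
  rintro (_ | ⟨i, a⟩) (_ | ⟨j, c⟩) huv
  · rfl
  · exact (key j c none huv.symm).symm
  · exact key i a none huv
  · exact key i a _ huv

theorem IsStraightLineOnePlanar.windmill (hB : IsStraightLineOnePlanar ⊤ B) (h₀ : B none = 0)
    (hwedge : ∀ j, B (some j) ∈ wedge) :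
    IsStraightLineOnePlanar (windmill m k) (windmillPos B) where
  injective := windmillPos_injective hB.injective h₀ hwedge
  notMem_openSegment u v huv w hwu hwv hw := by
    obtain ⟨i, a, b, hab, rfl, rfl⟩ := windmill_adj.1 huv
    rw [windmillPos_openSegment h₀] at hw
    rcases exists_blade_eq_or w i with ⟨c, rfl⟩ | ⟨j, c, hji, rfl⟩
    · rw [windmillPos_blade h₀, (shear_injective _).mem_set_image] at hw
      exact hB.notMem_openSegment ((top_adj a b).2 hab) c
        (fun h => hwu (by rw [h])) (fun h => hwv (by rw [h])) hw
    · exact Set.disjoint_left.1 (disjoint_shear_image_wedge (Fin.val_injective.ne hji))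
        (windmillPos_mem_image_wedge hwedge j c)
        (Set.image_mono (openSegment_subset_wedge_of_ne h₀ hwedge hab) hw)
  crossings_subsingleton u v huv := by
    obtain ⟨i, a, b, hab, rfl, rfl⟩ := windmill_adj.1 huv
    refine ((hB.crossings_subsingleton ((top_adj a b).2 hab)).image (shear (2 * (i : ℕ)))).anti ?_
    rintro p ⟨x, y, hxy, hne, hpab, hpxy⟩
    obtain ⟨j, c, d, hcd, rfl, rfl⟩ := windmill_adj.1 hxy
    rw [windmillPos_openSegment h₀] at hpab hpxy
    obtain rfl : j = i := by
      by_contra hji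
      exact Set.disjoint_left.1 (disjoint_shear_image_wedge (Fin.val_injective.ne hji))
        (Set.image_mono (openSegment_subset_wedge_of_ne h₀ hwedge hcd) hpxy)
        (Set.image_mono (openSegment_subset_wedge_of_ne h₀ hwedge hab) hpab)
    obtain ⟨q, hqab, rfl⟩ := hpab
    rw [(shear_injective _).mem_set_image] at hpxy
    refine ⟨q, ⟨c, d, (top_adj c d).2 hcd, fun h => hne ?_, hqab, hpxy⟩, rfl⟩
    rw [← Sym2.map_mk, ← Sym2.map_mk, h]

end WindmillDrawing

section K6

/-- Integer coordinates of a straight-line 1-planar drawing of `K₆`. -/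
def k6Z : Option (Fin 5) → ℤ × ℤ
  | none => (0, 0)
  | some j => ![(7, 6), (6, -3), (5, -1), (7, -6), (6, 1)] j

def k6Pos (a : Option (Fin 5)) : ℝ × ℝ := ((k6Z a).1, (k6Z a).2)

def k6Crossings : List (Sym2 (Option (Fin 5)) × Sym2 (Option (Fin 5))) :=
  [(s(none, some 1), s(some 2, some 3)), (s(none, some 4), s(some 0, some 2)),
    (s(some 0, some 1), s(some 3, some 4))]

def K6Cross (e f : Sym2 (Option (Fin 5))) : Prop := (e, f) ∈ k6Crossings ∨ (f, e) ∈ k6Crossings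

instance : DecidableRel K6Cross := fun _ _ => inferInstanceAs (Decidable (_ ∨ _))

theorem k6Z_injective : Function.Injective k6Z := by decide +kernel

theorem k6Z_mem_wedge : ∀ j, |(k6Z (some j)).2| < (k6Z (some j)).1 := by decide +kernel

theorem orient_k6Z_ne_zero : ∀ a b c, a ≠ b → c ≠ a → c ≠ b →
    orient (k6Z a) (k6Z b) (k6Z c) ≠ 0 := by
  decide +kernel

theorem segmentOffLine_k6Z_of_not_k6Cross : ∀ a b c d, a ≠ b → c ≠ d → s(c, d) ≠ s(a, b) →
    ¬ K6Cross s(a, b) s(c, d) → SegmentOffLine (k6Z a) (k6Z b) (k6Z c) (k6Z d) ∨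
      SegmentOffLine (k6Z c) (k6Z d) (k6Z a) (k6Z b) := by
  decide +kernel

theorem cross_k6Z_ne_zero_of_k6Cross : ∀ a b c d, K6Cross s(a, b) s(c, d) →
    cross (k6Z b - k6Z a) (k6Z d - k6Z c) ≠ 0 := by
  decide +kernel

theorem K6Cross.unique : ∀ {e f f'}, K6Cross e f → K6Cross e f' → f = f' := by decide +kernel

theorem cross_k6Pos (a b c d : Option (Fin 5)) :
    cross (k6Pos b - k6Pos a) (k6Pos d - k6Pos c) = cross (k6Z b - k6Z a) (k6Z d - k6Z c) := by
  simp only [cross, k6Pos, Prod.fst_sub, Prod.snd_sub]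
  push_cast
  ring

theorem orient_k6Pos (a b c : Option (Fin 5)) :
    orient (k6Pos a) (k6Pos b) (k6Pos c) = orient (k6Z a) (k6Z b) (k6Z c) :=
  cross_k6Pos a b a c

theorem SegmentOffLine.k6Pos {a b c d : Option (Fin 5)}
    (h : SegmentOffLine (k6Z a) (k6Z b) (k6Z c) (k6Z d)) :
    SegmentOffLine (k6Pos a) (k6Pos b) (k6Pos c) (k6Pos d) := by
  simp only [SegmentOffLine, orient_k6Pos]
  exact_mod_cast h

theorem k6Cross_of_mem_openSegment {a b c d : Option (Fin 5)} (hab : a ≠ b) (hcd : c ≠ d)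
    (hne : s(c, d) ≠ s(a, b)) {p : ℝ × ℝ} (hpab : p ∈ openSegment ℝ (k6Pos a) (k6Pos b))
    (hpcd : p ∈ openSegment ℝ (k6Pos c) (k6Pos d)) : K6Cross s(a, b) s(c, d) := by
  by_contra hcross
  rcases segmentOffLine_k6Z_of_not_k6Cross a b c d hab hcd hne hcross with h | h
  · exact Set.disjoint_left.1 h.k6Pos.disjoint_openSegment hpab hpcd
  · exact Set.disjoint_left.1 h.k6Pos.disjoint_openSegment hpcd hpab

theorem openSegment_k6Pos_congr {a b c d : Option (Fin 5)} (h : s(a, b) = s(c, d)) :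
    openSegment ℝ (k6Pos a) (k6Pos b) = openSegment ℝ (k6Pos c) (k6Pos d) := by
  rcases Sym2.eq_iff.1 h with ⟨rfl, rfl⟩ | ⟨rfl, rfl⟩
  · rfl
  · exact openSegment_symm ℝ _ _

theorem isStraightLineOnePlanar_k6Pos : IsStraightLineOnePlanar ⊤ k6Pos where
  injective a b h := k6Z_injective <| by
    simp only [k6Pos, Prod.mk.injEq, Int.cast_inj] at h
    exact Prod.ext h.1 h.2
  notMem_openSegment a b hab c hca hcb hc := by
    have := orient_eq_zero_of_mem_openSegment hc
    rw [orient_k6Pos] at this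
    exact orient_k6Z_ne_zero a b c ((top_adj a b).1 hab) hca hcb (by exact_mod_cast this)
  crossings_subsingleton a b hab := by
    rintro p ⟨c, d, hcd, hne, hpab, hpcd⟩ q ⟨c', d', hcd', hne', hqab, hqcd⟩
    have hcross := k6Cross_of_mem_openSegment ((top_adj a b).1 hab) ((top_adj c d).1 hcd)
      hne hpab hpcd
    have hcross' := k6Cross_of_mem_openSegment ((top_adj a b).1 hab) ((top_adj c' d').1 hcd')
      hne' hqab hqcd
    rw [← openSegment_k6Pos_congr (hcross.unique hcross')] at hqcd
    refine openSegment_inter_subsingleton ?_ ⟨hpab, hpcd⟩ ⟨hqab, hqcd⟩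
    rw [cross_k6Pos]
    exact_mod_cast cross_k6Z_ne_zero_of_k6Cross a b c d hcross

theorem k6Pos_none : k6Pos none = 0 := by
  simp [k6Pos, k6Z]

theorem k6Pos_mem_wedge (j : Fin 5) : k6Pos (some j) ∈ wedge := by
  simp only [wedge, k6Pos, Set.mem_ofPred_eq]
  exact_mod_cast k6Z_mem_wedge j

end K6

section WindmillMatching

variable {m k : ℕ}

theorem windmill_adj_cases ⦃u v : Option (Fin k × Fin m)⦄ (h : (windmill m k).Adj u v) :
    u ∈ ({none} : Finset _) ∨ v ∈ ({none} : Finset _) ∨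
      ∃ i, u ∈ Finset.univ.image (fun j => some (i, j)) ∧
        v ∈ Finset.univ.image (fun j => some (i, j)) := by
  obtain ⟨i, a, b, -, rfl, rfl⟩ := windmill_adj.1 h
  cases a with
  | none => exact .inl (Finset.mem_singleton_self _)
  | some a =>
    cases b with
    | none => exact .inr (.inl (Finset.mem_singleton_self _))
    | some b => exact .inr (.inr ⟨i, by simp, by simp⟩)

open Finset in
theorem windmill_ncard_edgeSet_le_of_isMatching {M : (windmill m k).Subgraph}
    (hM : M.IsMatching) : M.edgeSet.ncard ≤ 1 + k * (m / 2) :=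
  calc M.edgeSet.ncard
      ≤ #({none} : Finset _) + ∑ i : Fin k, #(univ.image fun j => some (i, j)) / 2 :=
        hM.ncard_edgeSet_le _ _ windmill_adj_cases
    _ = 1 + k * (m / 2) := by
        have hcard (i : Fin k) : #(univ.image fun j : Fin m => some (i, j)) = m :=
          (card_image_of_injective _ fun j j' h => by simpa using h).trans (card_fin m)
        simp [hcard]

end WindmillMatching

end OnePlanarWindmill

open OnePlanarWindmill

theorem stmt7 (N : ℕ) :
    ∃ (n : ℕ) (G : SimpleGraph (Fin n)),
      OnePlanar G ∧
      (∀ v, 5 ≤ Nat.card (G.neighborSet v)) ∧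
      (∃ v, Nat.card (G.neighborSet v) = 5) ∧
      N ≤ n ∧
      ∀ M : G.Subgraph, M.IsMatching → (M.edgeSet.ncard : ℚ) ≤ (2 * (n : ℚ) + 3) / 5 := by
  set k := max N 1
  have hk : 1 ≤ k := le_max_right N 1
  let e : Fin (k * 5 + 1) ≃ Option (Fin k × Fin 5) :=
    (finSuccEquiv _).trans (Equiv.optionCongr finProdFinEquiv.symm)
  let φ := Iso.comap e (windmill 5 k)
  refine ⟨k * 5 + 1, (windmill 5 k).comap e,
    ((isStraightLineOnePlanar_k6Pos.windmill k6Pos_none k6Pos_mem_wedge).comap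
      e.toEmbedding).onePlanar, fun v => ?_, ⟨e.symm (some (⟨0, hk⟩, 0)), ?_⟩,
    by omega, fun M hM => ?_⟩
  · exact φ.card_neighborSet v ▸ le_card_neighborSet_windmill hk _
  · rw [φ.card_neighborSet, Iso.comap_apply, Equiv.apply_symm_apply,
      card_neighborSet_windmill_some]
  · have hle := windmill_ncard_edgeSet_le_of_isMatching (hM.map φ.toHom φ.injective)
    rw [Subgraph.ncard_edgeSet_map_iso] at hle
    have : (M.edgeSet.ncard : ℚ) ≤ 1 + k * 2 := by exact_mod_cast hle
    rw [le_div_iff₀ (by norm_num)]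
    push_cast
    linarith
end
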